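/- Computing a minimum-size segmentation is equivalent to computing a minimum hitting set of the MNOST intervals: suppose every single-edge subtrajectory of T = v_0 … v_{k−1} is optimal. Then the minimum number of segments over all segmentations of T equals 1 plus the minimum cardinality of a set H ⊆ {1, …, k−2} such that for every minimal non-optimal subtrajectory T(i, j) of T there exists b ∈ H with i < b < j. -/
import Mathlib


open scoped ENNReal

variable {V : Type*}

/-- `f 0, f 1, …, f m` is a trajectory: every consecutive pair is joined by an edge
(of finite weight). -/
def IsTraj (w : V → V → ℝ≥0∞) (m : ℕ) (f : ℕ → V) : Prop :=
  ∀ i < m, w (f i) (f (i + 1)) < ⊤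

/-- The cost of the trajectory `f 0, …, f m`. -/
noncomputable def trajCost (w : V → V → ℝ≥0∞) (m : ℕ) (f : ℕ → V) : ℝ≥0∞ :=
  ∑ i ∈ Finset.range m, w (f i) (f (i + 1))

/-- The distance from `u` to `v`: the infimum of costs of all trajectories from `u` to `v`. -/
noncomputable def netDist (w : V → V → ℝ≥0∞) (u v : V) : ℝ≥0∞ :=
  ⨅ (m : ℕ) (f : ℕ → V) (_ : f 0 = u) (_ : f m = v) (_ : IsTraj w m f), trajCost w m f

/-- The subtrajectory `T(i, j)` of the trajectory given by `f` is optimal. -/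
def SegOpt (w : V → V → ℝ≥0∞) (f : ℕ → V) (i j : ℕ) : Prop :=
  trajCost w (j - i) (fun l => f (i + l)) = netDist w (f i) (f j)

/-- `b 0 = 0 < b 1 < … < b B = k - 1` is a segmentation of the trajectory
`f 0, …, f (k-1)` into `B` optimal segments. -/
def IsSeg (w : V → V → ℝ≥0∞) (f : ℕ → V) (k B : ℕ) (b : ℕ → ℕ) : Prop :=
  b 0 = 0 ∧ b B = k - 1 ∧ (∀ l < B, b l < b (l + 1)) ∧
    ∀ l < B, SegOpt w f (b l) (b (l + 1))

/-- `T(i, j)` is a minimal non-optimal subtrajectory (MNOST). -/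
def IsMNOST (w : V → V → ℝ≥0∞) (f : ℕ → V) (i j : ℕ) : Prop :=
  i < j ∧ ¬ SegOpt w f i j ∧ SegOpt w f (i + 1) j ∧ SegOpt w f i (j - 1)

lemma trajCost_lt_top (w : V → V → ℝ≥0∞) {m : ℕ} {f : ℕ → V} (h : IsTraj w m f) :
    trajCost w m f < ⊤ :=
  ENNReal.sum_lt_top.2 fun i hi => h i (Finset.mem_range.1 hi)

lemma netDist_le_trajCost (w : V → V → ℝ≥0∞) {m : ℕ} {f : ℕ → V} {u v : V}
    (h1 : f 0 = u) (h2 : f m = v) (h : IsTraj w m f) :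
    netDist w u v ≤ trajCost w m f := by
  simp only [netDist]
  refine iInf₂_le_of_le m f ?_
  rw [iInf_pos h1, iInf_pos h2, iInf_pos h]

lemma isTraj_sub (w : V → V → ℝ≥0∞) {m : ℕ} {f : ℕ → V} (h : IsTraj w m f)
    {i j : ℕ} (hjm : j ≤ m) : IsTraj w (j - i) (fun l => f (i + l)) := by
  intro t ht
  have : i + (t + 1) = (i + t) + 1 := by omega
  simp only [this]
  exact h (i + t) (by omega)

lemma trajCost_split (w : V → V → ℝ≥0∞) {i j m : ℕ} (hij : i ≤ j) (hjm : j ≤ m) (f : ℕ → V) :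
    trajCost w m f = trajCost w i f + trajCost w (j - i) (fun l => f (i + l))
      + trajCost w (m - j) (fun l => f (j + l)) := by
  have h1 : m = i + ((j - i) + (m - j)) := by omega
  conv_lhs => rw [trajCost, h1, Finset.sum_range_add, Finset.sum_range_add]
  rw [← add_assoc]
  have A : (∑ x ∈ Finset.range (j - i), w (f (i + x)) (f (i + x + 1)))
      = trajCost w (j - i) fun l => f (i + l) := by
    unfold trajCost
    apply Finset.sum_congr rfl
    intro x _
    exact congrArg₂ w rfl (congrArg f (by omega))
  have B : (∑ x ∈ Finset.range (m - j), w (f (i + (j - i + x))) (f (i + (j - i + x) + 1)))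
      = trajCost w (m - j) fun l => f (j + l) := by
    unfold trajCost
    apply Finset.sum_congr rfl
    intro x _
    exact congrArg₂ w (congrArg f (by omega)) (congrArg f (by omega))
  rw [A, B]
  rfl

/-- Concatenation of trajectories: `f` on `[0,i]`, then `g` (length `n`), then `f` from `j` on. -/
def trajConcat (f g : ℕ → V) (i n j : ℕ) : ℕ → V := fun l =>
  if l < i then f l else if l < i + n then g (l - i) else f (l - (i + n) + j)

section Concat

variable {f g : ℕ → V} {i n j : ℕ} (hg0 : g 0 = f i) (hgn : g n = f j)

lemma trajConcat_left (hg0 : g 0 = f i) (hgn : g n = f j) {l : ℕ} (hl : l ≤ i) :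
    trajConcat f g i n j l = f l := by
  unfold trajConcat
  rcases lt_or_eq_of_le hl with h | h
  · rw [if_pos h]
  · subst h
    rw [if_neg (lt_irrefl _)]
    by_cases hn : l < l + n
    · rw [if_pos hn]
      simpa using hg0
    · rw [if_neg hn]
      have hn0 : n = 0 := by omega
      have : l - (l + n) + j = j := by omega
      rw [this, ← hgn, hn0, hg0]

lemma trajConcat_mid (hg0 : g 0 = f i) (hgn : g n = f j) {t : ℕ} (ht : t ≤ n) :
    trajConcat f g i n j (i + t) = g t := by
  unfold trajConcat
  rw [if_neg (by omega)]
  rcases lt_or_eq_of_le ht with h | h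
  · rw [if_pos (by omega)]
    congr 1
    omega
  · subst h
    rw [if_neg (by omega)]
    rw [show i + t - (i + t) + j = j from by omega, ← hgn]

lemma trajConcat_right (hg0 : g 0 = f i) (hgn : g n = f j) {s : ℕ} :
    trajConcat f g i n j (i + n + s) = f (j + s) := by
  unfold trajConcat
  rw [if_neg (by omega), if_neg (by omega)]
  congr 1
  omega

lemma trajConcat_isTraj (w : V → V → ℝ≥0∞) {m : ℕ} (hf : IsTraj w m f)
    (hgt : IsTraj w n g) (hg0 : g 0 = f i) (hgn : g n = f j)
    (hij : i ≤ j) (hjm : j ≤ m) :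
    IsTraj w (i + n + (m - j)) (trajConcat f g i n j) := by
  intro l hl
  rcases lt_or_ge l i with h | h
  · rw [trajConcat_left hg0 hgn (le_of_lt h), trajConcat_left hg0 hgn (by omega : l + 1 ≤ i)]
    exact hf l (by omega)
  rcases lt_or_ge l (i + n) with h2 | h2
  · obtain ⟨t, rfl⟩ : ∃ t, l = i + t := ⟨l - i, by omega⟩
    rw [trajConcat_mid hg0 hgn (by omega : t ≤ n),
      show i + t + 1 = i + (t + 1) from by omega,
      trajConcat_mid hg0 hgn (by omega : t + 1 ≤ n)]
    exact hgt t (by omega)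
  · obtain ⟨s, rfl⟩ : ∃ s, l = i + n + s := ⟨l - (i + n), by omega⟩
    rw [trajConcat_right hg0 hgn,
      show i + n + s + 1 = i + n + (s + 1) from by omega,
      trajConcat_right hg0 hgn]
    have : j + s + 1 = j + (s + 1) := by omega
    rw [← this]
    exact hf (j + s) (by omega)

lemma trajConcat_cost (w : V → V → ℝ≥0∞) {m : ℕ}
    (hg0 : g 0 = f i) (hgn : g n = f j) (hij : i ≤ j) (hjm : j ≤ m) :
    trajCost w (i + n + (m - j)) (trajConcat f g i n j)
      = trajCost w i f + trajCost w n g + trajCost w (m - j) (fun l => f (j + l)) := by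
  unfold trajCost
  rw [Finset.sum_range_add, Finset.sum_range_add]
  congr 1
  · congr 1
    · apply Finset.sum_congr rfl
      intro x hx
      rw [Finset.mem_range] at hx
      rw [trajConcat_left hg0 hgn (by omega : x ≤ i),
        trajConcat_left hg0 hgn (by omega : x + 1 ≤ i)]
    · apply Finset.sum_congr rfl
      intro x hx
      rw [Finset.mem_range] at hx
      rw [trajConcat_mid hg0 hgn (by omega : x ≤ n),
        show i + x + 1 = i + (x + 1) from by omega,
        trajConcat_mid hg0 hgn (by omega : x + 1 ≤ n)]
  · apply Finset.sum_congr rfl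
    intro x hx
    rw [Finset.mem_range] at hx
    rw [trajConcat_right (s := x) hg0 hgn,
      show i + n + x + 1 = i + n + (x + 1) from by omega,
      trajConcat_right (s := x + 1) hg0 hgn]

end Concat

lemma netDist_splice (w : V → V → ℝ≥0∞) {m : ℕ} {f : ℕ → V} (hf : IsTraj w m f)
    {i j : ℕ} (hij : i ≤ j) (hjm : j ≤ m) :
    netDist w (f 0) (f m)
      ≤ trajCost w i f + netDist w (f i) (f j) + trajCost w (m - j) (fun l => f (j + l)) := by
  set A := trajCost w i f
  set C := trajCost w (m - j) (fun l => f (j + l))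
  set D := netDist w (f i) (f j) with hD
  by_cases hDtop : D = ⊤
  · simp [hDtop]
  apply ENNReal.le_of_forall_pos_le_add
  intro ε hε _
  have hlt : D < D + ε := ENNReal.lt_add_right hDtop (by exact_mod_cast hε.ne')
  have : netDist w (f i) (f j) < D + ε := by rw [← hD]; exact hlt
  rw [netDist] at this
  simp only [iInf_lt_iff] at this
  obtain ⟨n, g, hg0, hgn, hgt, hgc⟩ := this
  have hconc : netDist w (f 0) (f m) ≤ trajCost w (i + n + (m - j)) (trajConcat f g i n j) := by
    refine netDist_le_trajCost w ?_ ?_ (trajConcat_isTraj w hf hgt hg0 hgn hij hjm)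
    · exact trajConcat_left hg0 hgn (Nat.zero_le _)
    · rw [show i + n + (m - j) = i + n + (m - j) from rfl, trajConcat_right hg0 hgn]
      congr 1
      omega
  rw [trajConcat_cost w hg0 hgn hij hjm] at hconc
  calc netDist w (f 0) (f m) ≤ A + trajCost w n g + C := hconc
    _ ≤ A + (D + ε) + C := add_le_add (add_le_add le_rfl hgc.le) le_rfl
    _ = A + D + C + ε := by ring

lemma segOpt_sub (w : V → V → ℝ≥0∞) {m : ℕ} {f : ℕ → V} (hf : IsTraj w m f)
    (hopt : trajCost w m f = netDist w (f 0) (f m))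
    {i j : ℕ} (hij : i ≤ j) (hjm : j ≤ m) :
    trajCost w (j - i) (fun l => f (i + l)) = netDist w (f i) (f j) := by
  set M := trajCost w (j - i) (fun l => f (i + l)) with hM
  set D := netDist w (f i) (f j)
  have hDM : D ≤ M := by
    refine netDist_le_trajCost w rfl ?_ (isTraj_sub w hf hjm)
    show f (i + (j - i)) = f j
    congr 1
    omega
  refine le_antisymm ?_ hDM
  have hsplit := trajCost_split w hij hjm f
  have hsplice := netDist_splice w hf hij hjm
  rw [← hopt, hsplit] at hsplice
  set A := trajCost w i f
  set C := trajCost w (m - j) (fun l => f (j + l))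
  have hA : A ≠ ⊤ := (trajCost_lt_top w (fun l hl => hf l (by omega))).ne
  have hC : C ≠ ⊤ := by
    refine (trajCost_lt_top w ?_).ne
    intro l hl
    have : j + l + 1 = j + (l + 1) := by omega
    rw [show (fun l => f (j + l)) (l+1) = f (j + l + 1) from by simp [this]]
    exact hf (j + l) (by omega)
  have h1 : A + M + C ≤ A + D + C := hsplice
  have h2 : A + M ≤ A + D := (ENNReal.add_le_add_iff_right hC).1 h1
  exact (ENNReal.add_le_add_iff_left hA).1 h2

/-- Subsegment of an optimal segment is optimal. -/
lemma SegOpt.sub (w : V → V → ℝ≥0∞) {f : ℕ → V} {a i j c : ℕ}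
    (hai : a ≤ i) (hij : i ≤ j) (hjc : j ≤ c)
    (htr : IsTraj w (c - a) (fun l => f (a + l)))
    (hopt : SegOpt w f a c) : SegOpt w f i j := by
  have hopt' : trajCost w (c - a) (fun l => f (a + l))
      = netDist w ((fun l => f (a + l)) 0) ((fun l => f (a + l)) (c - a)) := by
    have em : (fun l => f (a + l)) (c - a) = f c := by
      simp only []
      congr 1
      omega
    rw [em]
    exact hopt
  have := segOpt_sub w htr hopt' (i := i - a) (j := j - a) (by omega) (by omega)
  unfold SegOpt
  have e1 : (fun l => (fun l => f (a + l)) ((i - a) + l)) = fun l => f (i + l) := by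
    funext l
    simp only []
    congr 1
    omega
  have e2 : j - a - (i - a) = j - i := by omega
  have e3 : a + (i - a) = i := by omega
  have e4 : a + (j - a) = j := by omega
  rw [e1, e2, e3, e4] at this
  exact this

lemma strictMono_of_step {b : ℕ → ℕ} {B : ℕ} (h : ∀ l < B, b l < b (l + 1)) :
    ∀ s t, s < t → t ≤ B → b s < b t := by
  intro s t hst htB
  induction t with
  | zero => omega
  | succ t ih =>
    rcases Nat.lt_or_ge s t with h' | h'
    · exact lt_trans (ih h' (by omega)) (h t (by omega))
    · have hst' : s = t := by omega
      subst hst'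
      exact h s (by omega)

set_option maxHeartbeats 1000000 in
/-- The minimum number of segments over all segmentations of `T` equals `1` plus the
minimum cardinality of a hitting set `H ⊆ {1, …, k-2}` of the MNOST intervals of `T`. -/
theorem min_segmentation_eq_one_add_min_hitting_set [Fintype V]
    (w : V → V → ℝ≥0∞) (k : ℕ) (hk : 2 ≤ k) (f : ℕ → V)
    (htraj : IsTraj w (k - 1) f)
    (hedges : ∀ i < k - 1, SegOpt w f i (i + 1)) :
    sInf {B | ∃ b : ℕ → ℕ, IsSeg w f k B b} =
      1 + sInf {n | ∃ H : Finset ℕ, H.card = n ∧ (∀ h ∈ H, 1 ≤ h ∧ h ≤ k - 2) ∧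
        ∀ i j, j ≤ k - 1 → IsMNOST w f i j → ∃ s ∈ H, i < s ∧ s < j} := by
  -- existence of a MNOST inside any non-optimal interval
  have exists_mnost : ∀ d a c, c - a ≤ d → a < c → c ≤ k - 1 → ¬ SegOpt w f a c →
      ∃ i j, a ≤ i ∧ i < j ∧ j ≤ c ∧ IsMNOST w f i j := by
    intro d
    induction d with
    | zero => intro a c h1 h2 _ _; omega
    | succ d ih =>
      intro a c h1 h2 h3 h4
      have hne : c ≠ a + 1 := by
        intro h
        subst h
        exact h4 (hedges a (by omega))
      by_cases h5 : SegOpt w f (a + 1) c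
      · by_cases h6 : SegOpt w f a (c - 1)
        · exact ⟨a, c, le_rfl, h2, le_rfl, h2, h4, h5, h6⟩
        · obtain ⟨i, j, hi, hij, hj, hm⟩ := ih a (c - 1) (by omega) (by omega) (by omega) h6
          exact ⟨i, j, hi, hij, by omega, hm⟩
      · obtain ⟨i, j, hi, hij, hj, hm⟩ := ih (a + 1) c (by omega) (by omega) h3 h5
        exact ⟨i, j, by omega, hij, hj, hm⟩
  -- subsegment optimality within [0, k-1]
  have subopt : ∀ a i j c, a ≤ i → i ≤ j → j ≤ c → c ≤ k - 1 →
      SegOpt w f a c → SegOpt w f i j := by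
    intro a i j c h1 h2 h3 h4 h5
    refine SegOpt.sub w h1 h2 h3 ?_ h5
    intro t ht
    exact htraj (a + t) (by omega)
  -- the segmentation set is nonempty
  have hSegNe : (k - 1) ∈ {B | ∃ b : ℕ → ℕ, IsSeg w f k B b} :=
    ⟨fun t => t, rfl, rfl, fun l _ => Nat.lt_succ_self l, fun l hl => hedges l hl⟩
  -- the hitting set family is nonempty
  have hHitNe : ((Finset.Icc 1 (k - 2)).card) ∈ {n | ∃ H : Finset ℕ, H.card = n ∧
      (∀ h ∈ H, 1 ≤ h ∧ h ≤ k - 2) ∧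
      ∀ i j, j ≤ k - 1 → IsMNOST w f i j → ∃ s ∈ H, i < s ∧ s < j} := by
    refine ⟨Finset.Icc 1 (k - 2), rfl, fun h hh => Finset.mem_Icc.1 hh, ?_⟩
    intro i j hj hm
    obtain ⟨hij, hns, -, -⟩ := hm
    have hji : j ≠ i + 1 := by
      intro h
      subst h
      exact hns (hedges i (by omega))
    exact ⟨i + 1, Finset.mem_Icc.2 ⟨by omega, by omega⟩, by omega, by omega⟩
  refine le_antisymm ?_ ?_
  · -- min segmentation ≤ 1 + min hitting set
    obtain ⟨H, hcard, hHsub, hHhit⟩ := Nat.sInf_mem ⟨_, hHitNe⟩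
    have e : Fin H.card ↪o ℕ := H.orderEmbOfFin rfl
    have hemem : ∀ t : Fin H.card, (H.orderEmbOfFin rfl) t ∈ H :=
      fun t => Finset.orderEmbOfFin_mem H rfl t
    set b : ℕ → ℕ := fun t => if t = 0 then 0
      else if ht : t - 1 < H.card then (H.orderEmbOfFin rfl) ⟨t - 1, ht⟩ else k - 1 with hb
    have hb0 : b 0 = 0 := rfl
    have hbval : ∀ t, 1 ≤ t → t ≤ H.card →
        ∃ ht : t - 1 < H.card, b t = (H.orderEmbOfFin rfl) ⟨t - 1, ht⟩ := by
      intro t h1 h2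
      refine ⟨by omega, ?_⟩
      show (if t = 0 then 0
        else if ht : t - 1 < H.card then (H.orderEmbOfFin rfl) ⟨t - 1, ht⟩ else k - 1) = _
      rw [if_neg (by omega), dif_pos]
    have hbtop : ∀ t, H.card + 1 ≤ t → b t = k - 1 := by
      intro t ht
      show (if t = 0 then 0
        else if ht : t - 1 < H.card then (H.orderEmbOfFin rfl) ⟨t - 1, ht⟩ else k - 1) = _
      rw [if_neg (by omega), dif_neg (by omega)]
    have hbB : b (H.card + 1) = k - 1 := hbtop _ le_rfl
    have hbH : ∀ t, 1 ≤ t → t ≤ H.card → b t ∈ H := by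
      intro t h1 h2
      obtain ⟨ht, hv⟩ := hbval t h1 h2
      rw [hv]
      exact hemem _
    have hub : ∀ t, b t ≤ k - 1 := by
      intro t
      by_cases h0 : t = 0
      · subst h0; rw [hb0]; omega
      by_cases h2 : t ≤ H.card
      · have := (hHsub _ (hbH t (by omega) h2)).2
        omega
      · rw [hbtop t (by omega)]
    have hstep : ∀ l < H.card + 1, b l < b (l + 1) := by
      intro l hl
      by_cases hl0 : l = 0
      · subst hl0
        rw [hb0]
        rcases Nat.eq_zero_or_pos H.card with hc0 | hc1
        · rw [hbtop 1 (by omega)]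
          omega
        · have := (hHsub _ (hbH 1 le_rfl hc1)).1
          have e1 : (0 : ℕ) + 1 = 1 := rfl
          rw [e1]
          omega
      · by_cases h2 : l + 1 ≤ H.card
        · obtain ⟨hq1, hv1⟩ := hbval l (by omega) (by omega)
          obtain ⟨hq2, hv2⟩ := hbval (l + 1) (by omega) h2
          rw [hv1, hv2]
          have : (⟨l - 1, hq1⟩ : Fin H.card) < ⟨l + 1 - 1, hq2⟩ := by
            rw [Fin.mk_lt_mk]
            omega
          exact (H.orderEmbOfFin rfl).lt_iff_lt.2 this
        · have hln : l = H.card := by omega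
          rw [hln, hbB]
          have := (hHsub _ (hbH H.card (by omega) le_rfl)).2
          omega
    have hreflect : ∀ x y, x ≤ H.card + 1 → y ≤ H.card + 1 → b x < b y → x < y := by
      intro x y hx hy hlt
      by_contra hxy
      push_neg at hxy
      rcases eq_or_lt_of_le hxy with rfl | h'
      · exact lt_irrefl _ hlt
      · exact absurd (strictMono_of_step hstep y x h' hx) (by omega)
    have hopt : ∀ l < H.card + 1, SegOpt w f (b l) (b (l + 1)) := by
      intro l hl
      by_contra hno
      obtain ⟨i, j, hi, hij, hj, hm⟩ := exists_mnost (b (l + 1) - b l) (b l) (b (l + 1))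
        le_rfl (hstep l hl) (hub _) hno
      obtain ⟨s, hsH, his, hsj⟩ := hHhit i j (le_trans hj (hub _)) hm
      obtain ⟨t0, ht0⟩ := (Finset.range_orderEmbOfFin H rfl).symm ▸
        (show (s : ℕ) ∈ (H : Set ℕ) from hsH)
      have hbt : b (t0.val + 1) = s := by
        obtain ⟨hq, hv⟩ := hbval (t0.val + 1) (by omega) (by omega)
        rw [hv, ← ht0]
        congr 1
      have h1 : l < t0.val + 1 :=
        hreflect l (t0.val + 1) (by omega) (by omega) (by rw [hbt]; omega)
      have h2 : t0.val + 1 < l + 1 :=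
        hreflect (t0.val + 1) (l + 1) (by omega) (by omega) (by rw [hbt]; omega)
      omega
    have hmem : (H.card + 1) ∈ {B | ∃ b : ℕ → ℕ, IsSeg w f k B b} :=
      ⟨b, hb0, hbB, hstep, hopt⟩
    have := Nat.sInf_le hmem
    omega
  · -- 1 + min hitting set ≤ min segmentation
    obtain ⟨b, hb0, hbB, hstep, hopt⟩ := Nat.sInf_mem ⟨_, hSegNe⟩
    set B := sInf {B | ∃ b : ℕ → ℕ, IsSeg w f k B b} with hB
    have hB1 : 1 ≤ B := by
      by_contra hB0
      have hE : B = 0 := by omega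
      rw [hE] at hbB
      omega
    have sm := strictMono_of_step hstep
    have hcard : ((Finset.Icc 1 (B - 1)).image b).card ≤ B - 1 :=
      le_trans Finset.card_image_le (by rw [Nat.card_Icc]; omega)
    have hbub : ∀ t, t ≤ B → b t ≤ k - 1 := by
      intro t ht
      rcases eq_or_lt_of_le ht with rfl | h'
      · omega
      · have := sm t B h' le_rfl
        omega
    have hmemHit : ((Finset.Icc 1 (B - 1)).image b).card ∈ {n | ∃ H : Finset ℕ, H.card = n ∧
        (∀ h ∈ H, 1 ≤ h ∧ h ≤ k - 2) ∧
        ∀ i j, j ≤ k - 1 → IsMNOST w f i j → ∃ s ∈ H, i < s ∧ s < j} := by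
      refine ⟨(Finset.Icc 1 (B - 1)).image b, rfl, ?_, ?_⟩
      · intro h hh
        obtain ⟨t, htmem, rfl⟩ := Finset.mem_image.1 hh
        rw [Finset.mem_Icc] at htmem
        have hpos : b 0 < b t := sm 0 t (by omega) (by omega)
        have hupper : b t < b B := sm t B (by omega) le_rfl
        rw [hb0] at hpos
        rw [hbB] at hupper
        omega
      · intro i j hj hm
        have hP0 : b 0 ≤ i := by omega
        set l := Nat.findGreatest (fun l => b l ≤ i) B with hl
        have hPl : b l ≤ i := Nat.findGreatest_spec (P := fun l => b l ≤ i) (Nat.zero_le B) hP0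
        have hlB' : l ≤ B := Nat.findGreatest_le B
        have hlB : l < B := by
          rcases eq_or_lt_of_le hlB' with h' | h'
          · exfalso
            rw [h', hbB] at hPl
            have hij' : i < j := hm.1
            omega
          · exact h'
        have hnext : i < b (l + 1) := by
          by_contra hc
          push_neg at hc
          exact Nat.findGreatest_is_greatest (Nat.lt_succ_self l) (by omega) hc
        by_cases hjl : j ≤ b (l + 1)
        · exfalso
          have hseg : SegOpt w f (b l) (b (l + 1)) := hopt l hlB
          exact hm.2.1
            (subopt (b l) i j (b (l + 1)) hPl hm.1.le hjl (hbub (l + 1) (by omega)) hseg)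
        · push_neg at hjl
          refine ⟨b (l + 1), ?_, hnext, hjl⟩
          refine Finset.mem_image.2 ⟨l + 1, Finset.mem_Icc.2 ⟨by omega, ?_⟩, rfl⟩
          by_contra hc
          have hlb : l + 1 = B := by omega
          rw [hlb, hbB] at hjl
          omega
    have := Nat.sInf_le hmemHit
    omega
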